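/- arXiv:2309.13899 — 3 statements merged into one kernel-verified Lean document; each statement's English description precedes it below -/
import Mathlib

section
/- Let b ∈ [0,1/3) and g× as above, with fixed points u− < 1/2 < u+. If p1, p2, p3 ≥ 1/2 then g×(p1,p2,p3) ≥ min(p1, p2, p3, u+); if p1, p2, p3 ≤ 1/2 then g×(p1,p2,p3) ≤ max(p1, p2, p3, u−). -/
/-- The majority voting function of three (independent) probabilities. -/
def majVote (p₁ p₂ p₃ : ℝ) : ℝ :=
  p₁*p₂*p₃ + p₁*p₂*(1-p₃) + p₂*p₃*(1-p₁) + p₃*p₁*(1-p₂)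

/-- Marked majority voting function of three probabilities, marking probability `b`. -/
noncomputable def gx3 (b p₁ p₂ p₃ : ℝ) : ℝ :=
  majVote ((1-b)*p₁ + b/2) ((1-b)*p₂ + b/2) ((1-b)*p₃ + b/2)

noncomputable def uMinus (b : ℝ) : ℝ :=
  1/2 - Real.sqrt ((1-b)^3 * (1-3*b)) / (2*(1-b)^3)

noncomputable def uPlus (b : ℝ) : ℝ :=
  1/2 + Real.sqrt ((1-b)^3 * (1-3*b)) / (2*(1-b)^3)

lemma majVote_mono (q1 q2 q3 r1 r2 r3 : ℝ)
    (h1 : r1 ≤ q1) (h2 : r2 ≤ q2) (h3 : r3 ≤ q3)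
    (hq1 : q1 ≤ 1) (hq2 : q2 ≤ 1)
    (hr2 : 0 ≤ r2) (hr3 : 0 ≤ r3) (hq3' : 0 ≤ q3) (hq1' : 0 ≤ q1) (hr3' : r3 ≤ 1) :
    majVote r1 r2 r3 ≤ majVote q1 q2 q3 := by
  unfold majVote
  nlinarith [mul_nonneg (sub_nonneg.2 h1)
      (by nlinarith [mul_nonneg hr2 (sub_nonneg.2 hr3'), mul_nonneg hr3 (sub_nonneg.2 (le_trans h2 hq2))] :
        (0:ℝ) ≤ r2*(1-r3)+r3*(1-r2)),
    mul_nonneg (sub_nonneg.2 h2)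
      (by nlinarith [mul_nonneg hq1' (sub_nonneg.2 hr3'), mul_nonneg hr3 (sub_nonneg.2 hq1)] :
        (0:ℝ) ≤ q1*(1-r3)+r3*(1-q1)),
    mul_nonneg (sub_nonneg.2 h3)
      (by nlinarith [mul_nonneg hq1' (sub_nonneg.2 hq2), mul_nonneg (le_trans hr2 h2) (sub_nonneg.2 hq1)] :
        (0:ℝ) ≤ q1*(1-q2)+q2*(1-q1))]

lemma gx3_diag_identity (b m : ℝ) :
    gx3 b m m m - m = (m - 1/2) * ((1 - 3*b) - 4*(1-b)^3*(m - 1/2)^2) / 2 := by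
  unfold gx3 majVote; ring

set_option maxHeartbeats 1600000 in
theorem stmt5 (b : ℝ) (hb0 : 0 ≤ b) (hb : b < 1/3)
    (p₁ p₂ p₃ : ℝ)
    (h₁ : p₁ ∈ Set.Icc (0:ℝ) 1) (h₂ : p₂ ∈ Set.Icc (0:ℝ) 1)
    (h₃ : p₃ ∈ Set.Icc (0:ℝ) 1) :
    ((1/2 ≤ p₁ ∧ 1/2 ≤ p₂ ∧ 1/2 ≤ p₃) →
      min (min p₁ p₂) (min p₃ (uPlus b)) ≤ gx3 b p₁ p₂ p₃) ∧
    ((p₁ ≤ 1/2 ∧ p₂ ≤ 1/2 ∧ p₃ ≤ 1/2) →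
      gx3 b p₁ p₂ p₃ ≤ max (max p₁ p₂) (max p₃ (uMinus b))) := by
  obtain ⟨h₁0, h₁1⟩ := h₁
  obtain ⟨h₂0, h₂1⟩ := h₂
  obtain ⟨h₃0, h₃1⟩ := h₃
  have hb1 : (0:ℝ) < 1 - b := by linarith
  have hc : (0:ℝ) < (1-b)^3 := by positivity
  set s : ℝ := Real.sqrt ((1-b)^3 * (1-3*b)) with hs
  have hs0 : 0 ≤ s := Real.sqrt_nonneg _
  have hss : s^2 = (1-b)^3 * (1-3*b) := Real.sq_sqrt (by nlinarith)
  constructor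
  · rintro ⟨hp1, hp2, hp3⟩
    set m : ℝ := min (min p₁ p₂) (min p₃ (uPlus b)) with hm
    have hup : 1/2 ≤ uPlus b := by
      unfold uPlus; have : 0 ≤ s / (2*(1-b)^3) := by positivity
      linarith
    have hm12 : 1/2 ≤ m := le_min (le_min hp1 hp2) (le_min hp3 hup)
    have hmp1 : m ≤ p₁ := le_trans (min_le_left _ _) (min_le_left _ _)
    have hmp2 : m ≤ p₂ := le_trans (min_le_left _ _) (min_le_right _ _)
    have hmp3 : m ≤ p₃ := le_trans (min_le_right _ _) (min_le_left _ _)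
    have hmu : m ≤ uPlus b := le_trans (min_le_right _ _) (min_le_right _ _)
    -- from m ≤ uPlus b : 4*(1-b)^3*(m-1/2)^2 ≤ 1-3*b
    have ht : 0 ≤ m - 1/2 := by linarith
    have h1 : (m - 1/2) * (2*(1-b)^3) ≤ s := by
      have : m - 1/2 ≤ s / (2*(1-b)^3) := by
        have := hmu; unfold uPlus at this; linarith
      rw [← le_div_iff₀ (by positivity)]; exact this
    have hsq : ((m - 1/2) * (2*(1-b)^3))^2 ≤ s^2 := by
      have := mul_self_le_mul_self (mul_nonneg ht (by positivity)) h1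
      nlinarith [this]
    have hkey : 4*(1-b)^3*(m - 1/2)^2 ≤ 1 - 3*b := by
      rw [hss] at hsq
      nlinarith [hc, sq_nonneg (m - 1/2)]
    have hdiag : m ≤ gx3 b m m m := by
      have hid := gx3_diag_identity b m
      linarith [mul_nonneg ht (sub_nonneg.2 hkey)]
    refine le_trans hdiag ?_
    unfold gx3
    have hA : ∀ x y : ℝ, x ≤ y → (1-b)*x+b/2 ≤ (1-b)*y+b/2 := fun x y h => by
      nlinarith [mul_nonneg hb1.le (sub_nonneg.2 h)]
    have hB : ∀ x : ℝ, x ≤ 1 → (1-b)*x+b/2 ≤ 1 := fun x h => by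
      nlinarith [mul_nonneg hb1.le (sub_nonneg.2 h)]
    have hC : ∀ x : ℝ, 0 ≤ x → 0 ≤ (1-b)*x+b/2 := fun x h => by
      nlinarith [mul_nonneg hb1.le h]
    have hm0 : (0:ℝ) ≤ m := by linarith
    exact majVote_mono _ _ _ _ _ _ (hA _ _ hmp1) (hA _ _ hmp2) (hA _ _ hmp3)
      (hB _ h₁1) (hB _ h₂1) (hC _ hm0) (hC _ hm0) (hC _ h₃0) (hC _ h₁0)
      (hB _ (hmp3.trans h₃1))
  · rintro ⟨hp1, hp2, hp3⟩
    set M : ℝ := max (max p₁ p₂) (max p₃ (uMinus b)) with hM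
    have hum : uMinus b ≤ 1/2 := by
      unfold uMinus; have : 0 ≤ s / (2*(1-b)^3) := by positivity
      linarith
    have hM12 : M ≤ 1/2 := max_le (max_le hp1 hp2) (max_le hp3 hum)
    have hMp1 : p₁ ≤ M := le_trans (le_max_left _ _) (le_max_left _ _)
    have hMp2 : p₂ ≤ M := le_trans (le_max_right _ _) (le_max_left _ _)
    have hMp3 : p₃ ≤ M := le_trans (le_max_left _ _) (le_max_right _ _)
    have hMu : uMinus b ≤ M := le_trans (le_max_right _ _) (le_max_right _ _)
    have hM0 : 0 ≤ M := le_trans h₁0 hMp1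
    have ht : 0 ≤ 1/2 - M := by linarith
    have h1 : (1/2 - M) * (2*(1-b)^3) ≤ s := by
      have : 1/2 - M ≤ s / (2*(1-b)^3) := by
        have := hMu; unfold uMinus at this; linarith
      rw [← le_div_iff₀ (by positivity)]; exact this
    have hsq : ((1/2 - M) * (2*(1-b)^3))^2 ≤ s^2 := by
      have := mul_self_le_mul_self (mul_nonneg ht (by positivity)) h1
      nlinarith [this]
    have hkey : 4*(1-b)^3*(M - 1/2)^2 ≤ 1 - 3*b := by
      rw [hss] at hsq
      nlinarith [hc, sq_nonneg (M - 1/2)]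
    have hdiag : gx3 b M M M ≤ M := by
      have hid := gx3_diag_identity b M
      linarith [mul_nonneg ht (sub_nonneg.2 hkey)]
    refine le_trans ?_ hdiag
    unfold gx3
    have hA : ∀ x y : ℝ, x ≤ y → (1-b)*x+b/2 ≤ (1-b)*y+b/2 := fun x y h => by
      nlinarith [mul_nonneg hb1.le (sub_nonneg.2 h)]
    have hB : ∀ x : ℝ, x ≤ 1 → (1-b)*x+b/2 ≤ 1 := fun x h => by
      nlinarith [mul_nonneg hb1.le (sub_nonneg.2 h)]
    have hC : ∀ x : ℝ, 0 ≤ x → 0 ≤ (1-b)*x+b/2 := fun x h => by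
      nlinarith [mul_nonneg hb1.le h]
    have hM1 : M ≤ 1 := by linarith
    exact majVote_mono _ _ _ _ _ _ (hA _ _ hMp1) (hA _ _ hMp2) (hA _ _ hMp3)
      (hB _ hM1) (hB _ hM1) (hC _ h₂0) (hC _ h₃0) (hC _ hM0) (hC _ hM0)
      (hB _ h₃1)
end

section
/- Let R be as above (I²-truncated α/2-stable subordinator with E[R_s] = s) and λ > 0 with ((2−α)/α)I²λ ≤ 1. Then the centered exponential moment satisfies E[exp(λ(R_s − s))] ≤ exp( (1/2)·((2−α)/α)²·(α/(4−α))·e^{((2−α)/α)I²λ}·I²·λ²·s ). -/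
open MeasureTheory

lemma aux_exp_quad {x : ℝ} (h0 : 0 ≤ x) (h1 : x ≤ 1) :
    Real.exp x - 1 - x ≤ x^2/2 * Real.exp x := by
  have h := Real.exp_bound' h0 h1 (n := 3) (by norm_num)
  simp [Finset.sum_range_succ, Nat.factorial] at h
  nlinarith [Real.add_one_le_exp x, sq_nonneg x, pow_nonneg h0 3]

set_option maxHeartbeats 1000000 in
/-- Centered exponential moment bound for the `I²`-truncated `α/2`-stable
subordinator (normalised so that `E[R_s] = s`), characterised at time `s`
through its moment generating function. -/
theorem stmt15 (α I s lam : ℝ) (hα : α ∈ Set.Ioo (0:ℝ) 2) (hI : 0 < I)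
    (hs : 0 ≤ s) (hlam : 0 < lam) (hsmall : (2-α)/α * I^2 * lam ≤ 1)
    (Ω : Type*) [MeasureSpace Ω] [IsProbabilityMeasure (volume : Measure Ω)]
    (R : Ω → ℝ) (hmeas : Measurable R) (hR0 : ∀ ω, 0 ≤ R ω)
    (hMGF : ∫ ω, Real.exp (lam * R ω) =
      Real.exp (s * ((α/2) * ((2-α)/α) ^ (α/2) * I ^ (α-2)) *
        ∫ y in Set.Ioc (0:ℝ) (((2-α)/α) * I^2),
          (Real.exp (lam * y) - 1) * y ^ (-1 - α/2))) :
    ∫ ω, Real.exp (lam * (R ω - s)) ≤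
      Real.exp (1/2 * ((2-α)/α)^2 * (α/(4-α)) *
        Real.exp ((2-α)/α * I^2 * lam) * I^2 * lam^2 * s) := by
  obtain ⟨hα0, hα2⟩ := hα
  set A : ℝ := (2-α)/α with hA_def
  have hA : 0 < A := div_pos (by linarith) hα0
  set M : ℝ := A * I^2 with hM_def
  have hM : 0 < M := mul_pos hA (pow_pos hI 2)
  set c : ℝ := α/2 * A ^ (α/2) * I ^ (α-2) with hc_def
  set C : ℝ := lam^2/2 * Real.exp (lam * M) with hC_def
  set K0 : ℝ := 1/2 * A^2 * (α/(4-α)) * Real.exp (A * I^2 * lam) * I^2 * lam^2 with hK0_def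
  set J : ℝ := ∫ y in Set.Ioc (0:ℝ) M, (Real.exp (lam * y) - 1) * y ^ (-1 - α/2) with hJ_def
  -- step 1: rewrite LHS
  have step1 : ∫ ω, Real.exp (lam * (R ω - s)) = Real.exp (s * c * J - lam * s) := by
    have h1 : ∀ ω, Real.exp (lam * (R ω - s)) =
        Real.exp (lam * R ω) * Real.exp (-(lam * s)) := by
      intro ω; rw [← Real.exp_add]; congr 1; ring
    simp_rw [h1]
    rw [integral_mul_const, hMGF, ← Real.exp_add, ← sub_eq_add_neg]
  rw [step1, Real.exp_le_exp]
  -- step 2: reduce to c * J ≤ lam + K0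
  suffices hcJ : c * J ≤ lam + K0 by
    have : s * c * J - lam * s = s * (c * J - lam) := by ring
    rw [this]
    calc s * (c * J - lam) ≤ s * K0 := by
          apply mul_le_mul_of_nonneg_left (by linarith) hs
      _ = K0 * s := by ring
  -- the dominating function
  set g : ℝ → ℝ := fun y => lam * y ^ (-(α/2)) + C * y ^ (1 - α/2) with hg_def
  have hr1 : (-1:ℝ) < -(α/2) := by linarith
  have hr2 : (-1:ℝ) < 1 - α/2 := by linarith
  have hg1 : IntegrableOn (fun y : ℝ => y ^ (-(α/2))) (Set.Ioc 0 M) :=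
    (intervalIntegral.intervalIntegrable_rpow' hr1).1
  have hg2 : IntegrableOn (fun y : ℝ => y ^ (1 - α/2)) (Set.Ioc 0 M) :=
    (intervalIntegral.intervalIntegrable_rpow' hr2).1
  have hgint : IntegrableOn g (Set.Ioc 0 M) :=
    (hg1.const_mul lam).add (hg2.const_mul C)
  -- pointwise bound
  have hpt : ∀ y ∈ Set.Ioc (0:ℝ) M,
      (Real.exp (lam * y) - 1) * y ^ (-1 - α/2) ≤ g y := by
    intro y hy
    obtain ⟨hy0, hyM⟩ := hy
    have e1 : y * y ^ (-1 - α/2) = y ^ (-(α/2)) := by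
      calc y * y ^ (-1 - α/2) = y ^ (1:ℝ) * y ^ (-1 - α/2) := by rw [Real.rpow_one]
        _ = y ^ (1 + (-1 - α/2)) := (Real.rpow_add hy0 _ _).symm
        _ = y ^ (-(α/2)) := by congr 1; ring
    have e2 : y^2 * y ^ (-1 - α/2) = y ^ (1 - α/2) := by
      calc y^2 * y ^ (-1 - α/2) = y ^ ((2:ℝ)) * y ^ (-1 - α/2) := by
            rw [show ((2:ℝ)) = ((2:ℕ):ℝ) by norm_num, Real.rpow_natCast]
        _ = y ^ (2 + (-1 - α/2)) := (Real.rpow_add hy0 _ _).symm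
        _ = y ^ (1 - α/2) := by congr 1; ring
    have hx0 : 0 ≤ lam * y := by positivity
    have hxM : lam * y ≤ lam * M := by nlinarith
    have hx1 : lam * y ≤ 1 := by
      calc lam * y ≤ lam * M := hxM
        _ = A * I^2 * lam := by rw [hM_def]; ring
        _ ≤ 1 := hsmall
    have key : Real.exp (lam * y) - 1 ≤ lam * y + C * y^2 := by
      have h1 := aux_exp_quad hx0 hx1
      have h2 : Real.exp (lam * y) ≤ Real.exp (lam * M) := Real.exp_le_exp.mpr hxM
      have h3 : (lam * y)^2 / 2 * Real.exp (lam * y) ≤ (lam*y)^2/2 * Real.exp (lam * M) := by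
        apply mul_le_mul_of_nonneg_left h2 (by positivity)
      rw [hC_def]; nlinarith
    calc (Real.exp (lam * y) - 1) * y ^ (-1 - α/2)
        ≤ (lam * y + C * y^2) * y ^ (-1 - α/2) := by
          apply mul_le_mul_of_nonneg_right key (Real.rpow_nonneg hy0.le _)
      _ = lam * (y * y ^ (-1 - α/2)) + C * (y^2 * y ^ (-1 - α/2)) := by ring
      _ = g y := by rw [e1, e2]
  -- J ≤ ∫ g
  have hJle : J ≤ ∫ y in Set.Ioc (0:ℝ) M, g y := by
    rw [hJ_def]
    apply integral_mono_of_nonneg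
    · filter_upwards [ae_restrict_mem measurableSet_Ioc] with y hy
      obtain ⟨hy0, _⟩ := hy
      have : (1:ℝ) ≤ Real.exp (lam * y) := by
        rw [← Real.exp_zero]; exact Real.exp_le_exp.mpr (by positivity)
      exact mul_nonneg (by linarith) (Real.rpow_nonneg hy0.le _)
    · exact hgint
    · filter_upwards [ae_restrict_mem measurableSet_Ioc] with y hy
      exact hpt y hy
  -- value of ∫ g
  have hval : ∫ y in Set.Ioc (0:ℝ) M, g y =
      lam * (M ^ (1 - α/2) / (1 - α/2)) + C * (M ^ (2 - α/2) / (2 - α/2)) := by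
    have hne1 : -(α/2) + 1 ≠ 0 := by intro h; nlinarith
    have hne2 : 1 - α/2 + 1 ≠ 0 := by intro h; nlinarith
    rw [← intervalIntegral.integral_of_le hM.le]
    have i1 : ∫ y in (0:ℝ)..M, y ^ (-(α/2)) = M ^ (1 - α/2) / (1 - α/2) := by
      rw [integral_rpow (Or.inl hr1),
        Real.zero_rpow hne1]
      rw [show -(α/2) + 1 = 1 - α/2 by ring]
      ring
    have i2 : ∫ y in (0:ℝ)..M, y ^ (1 - α/2) = M ^ (2 - α/2) / (2 - α/2) := by
      rw [integral_rpow (Or.inl hr2),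
        Real.zero_rpow hne2]
      rw [show 1 - α/2 + 1 = 2 - α/2 by ring]
      ring
    rw [hg_def]
    rw [intervalIntegral.integral_add
      ((intervalIntegral.intervalIntegrable_rpow' hr1).const_mul lam)
      ((intervalIntegral.intervalIntegrable_rpow' hr2).const_mul C),
      intervalIntegral.integral_const_mul, intervalIntegral.integral_const_mul, i1, i2]
  -- final algebra
  have halg : c * (lam * (M ^ (1 - α/2) / (1 - α/2)) + C * (M ^ (2 - α/2) / (2 - α/2)))
      = lam + K0 := by
    have hMe1 : M ^ (1 - α/2) = A ^ (1 - α/2) * I ^ (2 - α) := by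
      rw [hM_def, Real.mul_rpow hA.le (by positivity), ← Real.rpow_natCast I 2,
        ← Real.rpow_mul hI.le]
      congr 2
      push_cast; ring
    have hMe2 : M ^ (2 - α/2) = A ^ (2 - α/2) * I ^ (4 - α) := by
      rw [hM_def, Real.mul_rpow hA.le (by positivity), ← Real.rpow_natCast I 2,
        ← Real.rpow_mul hI.le]
      congr 2
      push_cast; ring
    have hAc : A ^ (α/2) * A ^ (1 - α/2) = A := by
      rw [← Real.rpow_add hA, show α/2 + (1 - α/2) = (1:ℝ) by ring, Real.rpow_one]
    have hAc2 : A ^ (α/2) * A ^ (2 - α/2) = A ^ 2 := by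
      rw [← Real.rpow_add hA, show α/2 + (2 - α/2) = ((2:ℕ):ℝ) by push_cast; ring,
        Real.rpow_natCast]
    have hIc : I ^ (α-2) * I ^ (2 - α) = 1 := by
      rw [← Real.rpow_add hI, show α - 2 + (2 - α) = (0:ℝ) by ring, Real.rpow_zero]
    have hIc2 : I ^ (α-2) * I ^ (4 - α) = I ^ 2 := by
      rw [← Real.rpow_add hI, show α - 2 + (4 - α) = ((2:ℕ):ℝ) by push_cast; ring,
        Real.rpow_natCast]
    have hexp : Real.exp (lam * M) = Real.exp (A * I^2 * lam) := by
      rw [hM_def]; ring_nf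
    have d1 : (1:ℝ) - α/2 ≠ 0 := by intro h; nlinarith
    have d2 : (2:ℝ) - α/2 ≠ 0 := by intro h; nlinarith
    have d3 : (4:ℝ) - α ≠ 0 := by intro h; nlinarith
    have d4 : (2:ℝ) - α ≠ 0 := by intro h; nlinarith
    have d5 : α ≠ 0 := ne_of_gt hα0
    calc c * (lam * (M ^ (1 - α/2) / (1 - α/2)) + C * (M ^ (2 - α/2) / (2 - α/2)))
        = lam * ((α/2)/(1 - α/2)) * (A ^ (α/2) * A ^ (1 - α/2)) *
            (I ^ (α-2) * I ^ (2 - α)) +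
          C * ((α/2)/(2 - α/2)) * (A ^ (α/2) * A ^ (2 - α/2)) *
            (I ^ (α-2) * I ^ (4 - α)) := by
          rw [hc_def, hMe1, hMe2]; field_simp
      _ = lam + K0 := by
          have k1 : α/2/(1 - α/2) * ((2-α)/α) = 1 := by
            field_simp
          have k2 : α/2/(2 - α/2) = α/(4-α) := by
            rw [div_eq_div_iff d2 d3]; ring
          rw [hAc, hAc2, hIc, hIc2, hC_def, hK0_def, hexp, hA_def]
          linear_combination lam * k1 +
            (lam^2/2 * Real.exp ((2-α)/α * I^2 * lam) * I^2 * ((2-α)/α)^2) * k2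
  have hc0 : 0 ≤ c := by
    rw [hc_def]
    positivity
  calc c * J ≤ c * (∫ y in Set.Ioc (0:ℝ) M, g y) := mul_le_mul_of_nonneg_left hJle hc0
    _ = lam + K0 := by rw [hval, halg]
end

section
/- Let k ∈ ℕ and let I : (0,δ) → (0,∞) satisfy ε²|log ε|/I(ε)² → 0 as ε → 0. Let R^ε be the I(ε)²-truncated α/2-stable subordinator normalized so that E[R^ε_s] = s. Then there exists ε_k > 0 such that for all ε ∈ (0, ε_k) and all s ≤ ε²|log ε|, P(|R^ε_s − s| ≥ (k+1) I(ε)² |log ε|) ≤ ε^k. -/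
/-!
Chernoff's bound with `λ = I(ε)⁻²`. The Lévy measure of `R^ε` lives on `(0, K I(ε)²]` with
`K = (2-α)/α`, where `e^{λy} - 1 ≤ λ e^K y`; hence the Laplace exponent satisfies
`ψ(λ) ≤ e^K / I(ε)²`, and since `ε²|log ε| = o(I(ε)²)` the term `s ψ(λ)` is at most
`|log ε|`, against `λ (k+1) I(ε)² |log ε| = (k+1)|log ε|`. The lower deviation is empty,
because `s < (k+1) I(ε)² |log ε|` and `R^ε ≥ 0`.
-/

open MeasureTheory Filter ProbabilityTheory Real Set Topology

lemma exp_sub_one_le_mul_exp (x : ℝ) : exp x - 1 ≤ x * exp x := by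
  have h := add_one_le_exp (-x)
  have : exp (-x) * exp x = 1 := by rw [← exp_add, neg_add_cancel, exp_zero]
  nlinarith [exp_pos x]

lemma exp_mul_sub_one_le {lam y M : ℝ} (hlam : 0 ≤ lam) (hy : 0 ≤ y) (hyM : y ≤ M) :
    exp (lam * y) - 1 ≤ lam * exp (lam * M) * y :=
  calc exp (lam * y) - 1 ≤ lam * y * exp (lam * y) := exp_sub_one_le_mul_exp _
    _ ≤ lam * y * exp (lam * M) := by gcongr
    _ = lam * exp (lam * M) * y := by ring

lemma integral_Ioc_exp_mul_sub_one_mul_rpow_le {p lam M : ℝ} (hp : p < 1) (hlam : 0 ≤ lam)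
    (hM : 0 ≤ M) :
    ∫ y in Ioc 0 M, (exp (lam * y) - 1) * y ^ (-1 - p)
      ≤ lam * exp (lam * M) * (M ^ (1 - p) / (1 - p)) := by
  have hint : IntegrableOn (fun y : ℝ => lam * exp (lam * M) * y ^ (-p)) (Ioc 0 M) :=
    ((intervalIntegral.intervalIntegrable_rpow' (by linarith)).1).const_mul _
  have hpointwise : ∀ y ∈ Ioc 0 M,
      (exp (lam * y) - 1) * y ^ (-1 - p) ≤ lam * exp (lam * M) * y ^ (-p) := by
    rintro y ⟨hy0, hyM⟩
    have hpow : y * y ^ (-1 - p) = y ^ (-p) := by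
      rw [show -p = 1 + (-1 - p) by ring, rpow_add hy0, rpow_one]
    calc (exp (lam * y) - 1) * y ^ (-1 - p)
        ≤ lam * exp (lam * M) * y * y ^ (-1 - p) := by
          gcongr; exact exp_mul_sub_one_le hlam hy0.le hyM
      _ = lam * exp (lam * M) * y ^ (-p) := by rw [mul_assoc, hpow]
  have hrpow : ∫ y in Ioc 0 M, y ^ (-p) = M ^ (1 - p) / (1 - p) := by
    rw [← intervalIntegral.integral_of_le hM, integral_rpow (Or.inl (by linarith)),
      zero_rpow (by linarith)]
    ring_nf
  calc ∫ y in Ioc 0 M, (exp (lam * y) - 1) * y ^ (-1 - p)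
      ≤ ∫ y in Ioc 0 M, lam * exp (lam * M) * y ^ (-p) := by
        refine integral_mono_of_nonneg ?_ hint ?_
        · filter_upwards [ae_restrict_mem measurableSet_Ioc] with y hy
          exact mul_nonneg (sub_nonneg.2 (one_le_exp (mul_nonneg hlam hy.1.le)))
            (rpow_nonneg hy.1.le _)
        · exact (ae_restrict_mem measurableSet_Ioc).mono hpointwise
    _ = lam * exp (lam * M) * (M ^ (1 - p) / (1 - p)) := by
        rw [integral_const_mul, hrpow]

/-- Laplace exponent `ψ_b` of the `b²`-truncated `α/2`-stable subordinator with unit mean,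
`E[exp(λ R_s)] = exp(s ψ_b(λ))`. -/
noncomputable def truncStableExponent (α b lam : ℝ) : ℝ :=
  α / 2 * ((2 - α) / α) ^ (α / 2) * b ^ (α - 2) *
    ∫ y in Ioc 0 ((2 - α) / α * b ^ 2), (exp (lam * y) - 1) * y ^ (-1 - α / 2)

lemma truncStableExponent_inv_sq_le {α b : ℝ} (hα : α ∈ Ioo 0 2) (hb : 0 < b) :
    truncStableExponent α b (b ^ 2)⁻¹ ≤ exp ((2 - α) / α) / b ^ 2 := by
  obtain ⟨hα0, hα2⟩ := hα
  set K := (2 - α) / α with hK_def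
  have hK : 0 < K := div_pos (by linarith) hα0
  have hJ := integral_Ioc_exp_mul_sub_one_mul_rpow_le (p := α / 2) (lam := (b ^ 2)⁻¹)
    (M := K * b ^ 2) (by linarith) (by positivity) (by positivity)
  have hM : (K * b ^ 2) ^ (1 - α / 2) = K ^ (1 - α / 2) * b ^ (2 - α) := by
    rw [mul_rpow hK.le (by positivity), ← rpow_natCast, ← rpow_mul hb.le]
    congr 2; push_cast; ring
  have hKpow : K ^ (α / 2) * K ^ (1 - α / 2) = K := by
    rw [← rpow_add hK]; norm_num
  have hbpow : b ^ (α - 2) * b ^ (2 - α) = 1 := by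
    rw [← rpow_add hb]; norm_num
  have hKα : α / 2 * K = 1 - α / 2 := by rw [hK_def]; field_simp
  calc truncStableExponent α b (b ^ 2)⁻¹
      ≤ α / 2 * K ^ (α / 2) * b ^ (α - 2) *
          ((b ^ 2)⁻¹ * exp ((b ^ 2)⁻¹ * (K * b ^ 2)) *
            ((K * b ^ 2) ^ (1 - α / 2) / (1 - α / 2))) := by
        unfold truncStableExponent; gcongr
    _ = exp K / b ^ 2 := by
        have : (b ^ 2)⁻¹ * (K * b ^ 2) = K := by field_simp
        rw [this, hM]
        have h1 : (1 : ℝ) - α / 2 ≠ 0 := by linarith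
        calc α / 2 * K ^ (α / 2) * b ^ (α - 2) *
              ((b ^ 2)⁻¹ * exp K * (K ^ (1 - α / 2) * b ^ (2 - α) / (1 - α / 2)))
            = α / 2 * (K ^ (α / 2) * K ^ (1 - α / 2)) * (b ^ (α - 2) * b ^ (2 - α))
                / (1 - α / 2) * (exp K / b ^ 2) := by ring
          _ = exp K / b ^ 2 := by rw [hKpow, hbpow, hKα, mul_one, div_self h1, one_mul]

lemma measureReal_abs_sub_ge_le_exp_mul_mgf {Ω : Type*} [MeasurableSpace Ω] {μ : Measure Ω}
    [IsFiniteMeasure μ] {X : Ω → ℝ} (hX : ∀ ω, 0 ≤ X ω) {s t lam : ℝ} (hst : s < t)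
    (hlam : 0 ≤ lam) (hint : Integrable (fun ω => exp (lam * X ω)) μ) :
    μ.real {ω | t ≤ |X ω - s|} ≤ exp (-lam * (s + t)) * mgf X μ lam := by
  have hsub : {ω | t ≤ |X ω - s|} ⊆ {ω | s + t ≤ X ω} := by
    intro ω (hω : t ≤ |X ω - s|)
    rcases le_abs'.1 hω with h | h
    · linarith [hX ω]
    · show s + t ≤ X ω; linarith
  exact (measureReal_mono hsub).trans (measure_ge_le_exp_mul_mgf _ hlam hint)

lemma measure_abs_sub_ge_le_pow {Ω : Type*} [MeasurableSpace Ω] {μ : Measure Ω}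
    [IsFiniteMeasure μ] {α b ε s : ℝ} (k : ℕ) (hα : α ∈ Ioo 0 2) (hb : 0 < b)
    (hε0 : 0 < ε) (hε1 : ε < exp (-1))
    (hsmall : ε ^ 2 * |log ε| / b ^ 2 < exp (-((2 - α) / α)))
    (hs0 : 0 ≤ s) (hs : s ≤ ε ^ 2 * |log ε|) {X : Ω → ℝ} (hX : ∀ ω, 0 ≤ X ω)
    (hmgf : mgf X μ (b ^ 2)⁻¹ = exp (s * truncStableExponent α b (b ^ 2)⁻¹)) :
    μ {ω | (k + 1 : ℝ) * b ^ 2 * |log ε| ≤ |X ω - s|} ≤ ENNReal.ofReal (ε ^ k) := by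
  set L := |log ε| with hL_def
  set K := (2 - α) / α
  have hK : 0 < K := div_pos (by linarith [hα.2]) hα.1
  have hlog : log ε < -1 := by rwa [← log_exp (-1), log_lt_log_iff hε0 (exp_pos _)]
  have hL : 1 ≤ L := by rw [hL_def, abs_of_neg (by linarith)]; linarith
  have hb2 : 0 < b ^ 2 := by positivity
  have hεL : ε ^ 2 * L < b ^ 2 := by
    have : exp (-K) < 1 := exp_lt_one_iff.2 (neg_neg_of_pos hK)
    rw [div_lt_iff₀ hb2] at hsmall
    nlinarith
  have hst : s < (k + 1 : ℝ) * b ^ 2 * L := by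
    have : b ^ 2 ≤ (k + 1 : ℝ) * b ^ 2 * L := by
      nlinarith [mul_le_mul_of_nonneg_left hL hb2.le, (Nat.cast_nonneg k : (0 : ℝ) ≤ k)]
    linarith
  have hint : Integrable (fun ω => exp ((b ^ 2)⁻¹ * X ω)) μ :=
    Integrable.of_integral_ne_zero (show mgf X μ _ ≠ 0 by rw [hmgf]; positivity)
  have hsψ : s * truncStableExponent α b (b ^ 2)⁻¹ ≤ L :=
    calc s * truncStableExponent α b (b ^ 2)⁻¹ ≤ s * (exp K / b ^ 2) :=
          mul_le_mul_of_nonneg_left (truncStableExponent_inv_sq_le hα hb) hs0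
      _ ≤ ε ^ 2 * L * (exp K / b ^ 2) := by gcongr
      _ = ε ^ 2 * L / b ^ 2 * exp K := by ring
      _ ≤ exp (-K) * exp K := by gcongr
      _ = 1 := by rw [← exp_add, neg_add_cancel, exp_zero]
      _ ≤ L := hL
  have hbound :
      exp (-(b ^ 2)⁻¹ * (s + (k + 1 : ℝ) * b ^ 2 * L)) * mgf X μ (b ^ 2)⁻¹ ≤ ε ^ k := by
    have hthr : (b ^ 2)⁻¹ * ((k + 1 : ℝ) * b ^ 2 * L) = (k + 1) * L := by field_simp
    have hkL : (k : ℝ) * log ε = -(k * L) := by rw [hL_def, abs_of_neg (by linarith)]; ring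
    rw [hmgf, ← exp_add, ← exp_log (pow_pos hε0 k), log_pow]
    refine exp_le_exp.2 ?_
    have : 0 ≤ (b ^ 2)⁻¹ * s := by positivity
    rw [hkL, neg_mul, mul_add, hthr]
    linarith
  rw [← ofReal_measureReal]
  exact ENNReal.ofReal_le_ofReal
    ((measureReal_abs_sub_ge_le_exp_mul_mgf hX hst (by positivity) hint).trans hbound)

theorem stmt16_general (α : ℝ) (hα : α ∈ Set.Ioo (0:ℝ) 2) (k : ℕ)
    (δ : ℝ) (I : ℝ → ℝ) (hI : ∀ ε ∈ Set.Ioo (0:ℝ) δ, 0 < I ε)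
    (hB : Tendsto (fun ε => ε^2 * |Real.log ε| / (I ε)^2)
      (nhdsWithin 0 (Set.Ioo (0:ℝ) δ)) (nhds 0))
    (Ω : Type*) [MeasureSpace Ω] [IsProbabilityMeasure (volume : Measure Ω)]
    (R : ℝ → ℝ → Ω → ℝ)
    (hR0 : ∀ ε s ω, 0 ≤ R ε s ω)
    (hMGF : ∀ ε ∈ Set.Ioo (0:ℝ) δ, ∀ s : ℝ, 0 ≤ s → ∀ lam : ℝ,
      ∫ ω, Real.exp (lam * R ε s ω) =
        Real.exp (s * ((α/2) * ((2-α)/α) ^ (α/2) * (I ε) ^ (α-2)) *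
          ∫ y in Set.Ioc (0:ℝ) (((2-α)/α) * (I ε)^2),
            (Real.exp (lam * y) - 1) * y ^ (-1 - α/2))) :
    ∃ εk > (0:ℝ), ∀ ε : ℝ, 0 < ε → ε < εk → ε < δ →
      ∀ s : ℝ, 0 ≤ s → s ≤ ε^2 * |Real.log ε| →
        (volume {ω | (k+1 : ℝ) * (I ε)^2 * |Real.log ε| ≤ |R ε s ω - s|})
          ≤ ENNReal.ofReal (ε^k) := by
  have hev : ∀ᶠ ε in 𝓝[Ioo 0 δ] 0,
      ε ^ 2 * |log ε| / I ε ^ 2 < exp (-((2 - α) / α)) ∧ ε < exp (-1) :=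
    (hB.eventually (eventually_lt_nhds (exp_pos _))).and
      (nhdsWithin_le_nhds (eventually_lt_nhds (exp_pos _)))
  obtain ⟨εk, hεk, hεk_spec⟩ := Metric.mem_nhdsWithin_iff.1 hev
  refine ⟨εk, hεk, fun ε hε0 hεεk hεδ s hs0 hs => ?_⟩
  have hε : ε ∈ Ioo 0 δ := ⟨hε0, hεδ⟩
  obtain ⟨hsmall, hε1⟩ : _ ∧ _ :=
    hεk_spec ⟨by rwa [Metric.mem_ball, Real.dist_eq, sub_zero, abs_of_pos hε0], hε⟩
  exact measure_abs_sub_ge_le_pow k hα (hI ε hε) hε0 hε1 hsmall hs0 hs (hR0 ε s)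
    ((hMGF ε hε s hs0 _).trans (by rw [mul_assoc]; rfl))

/-- Deviation bound for the truncated stable subordinator: if `I` satisfies
`ε²|log ε|/I(ε)² → 0`, then for small `ε` and `s ≤ ε²|log ε|`,
`P(|R^ε_s − s| ≥ (k+1) I(ε)² |log ε|) ≤ ε^k`. The family `R` is characterised
through its moment generating functions. -/
theorem stmt16 (α : ℝ) (hα : α ∈ Set.Ioo (0:ℝ) 2) (k : ℕ)
    (δ : ℝ) (hδ : 0 < δ) (I : ℝ → ℝ) (hI : ∀ ε ∈ Set.Ioo (0:ℝ) δ, 0 < I ε)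
    (hB : Tendsto (fun ε => ε^2 * |Real.log ε| / (I ε)^2)
      (nhdsWithin 0 (Set.Ioo (0:ℝ) δ)) (nhds 0))
    (Ω : Type*) [MeasureSpace Ω] [IsProbabilityMeasure (volume : Measure Ω)]
    (R : ℝ → ℝ → Ω → ℝ)
    (hmeas : ∀ ε s, Measurable (R ε s))
    (hR0 : ∀ ε s ω, 0 ≤ R ε s ω)
    (hMGF : ∀ ε ∈ Set.Ioo (0:ℝ) δ, ∀ s : ℝ, 0 ≤ s → ∀ lam : ℝ,
      ∫ ω, Real.exp (lam * R ε s ω) =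
        Real.exp (s * ((α/2) * ((2-α)/α) ^ (α/2) * (I ε) ^ (α-2)) *
          ∫ y in Set.Ioc (0:ℝ) (((2-α)/α) * (I ε)^2),
            (Real.exp (lam * y) - 1) * y ^ (-1 - α/2))) :
    ∃ εk > (0:ℝ), ∀ ε : ℝ, 0 < ε → ε < εk → ε < δ →
      ∀ s : ℝ, 0 ≤ s → s ≤ ε^2 * |Real.log ε| →
        (volume {ω | (k+1 : ℝ) * (I ε)^2 * |Real.log ε| ≤ |R ε s ω - s|})
          ≤ ENNReal.ofReal (ε^k) :=
  stmt16_general α hα k δ I hI hB Ω R hR0 hMGF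
end
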